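/- arXiv:2510.17024 — 2 statements merged into one kernel-verified Lean document; each statement's English description precedes it below -/
import Mathlib

section
/- Let $\omega_t, \eta_t, \upsilon_t, \psi_t$ be nonnegative random variables adapted to a filtration $(\mathcal{F}_t)$ satisfying $\mathbb{E}[\omega_{t+1} \mid \mathcal{F}_t] \le (1 + \eta_t)\omega_t + \upsilon_t - \psi_t$ for all $t \ge 0$, with $\sum_{t=0}^\infty \eta_t < \infty$ and $\sum_{t=0}^\infty \upsilon_t < \infty$ almost surely. Then almost surely: (i) $\lim_{t\to\infty} \omega_t$ exists and is finite, and (ii) $\sum_{t=0}^\infty \psi_t < \infty$. -/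
/-!
Dividing by the compounded factor `P t = ∏_{s<t} (1 + η s)` turns the recursion into the statement
that `X t = ω t / P t + ∑_{s<t} (ψ s - υ s) / P (s + 1)` is a supermartingale. It is bounded below
by the predictable process `-∑_{s<t} υ s / P (s + 1)`, so stopping it just before that sum exceeds
`M` yields a supermartingale bounded below by `-M`, which converges a.s. by Doob's theorem. Where
`∑ υ` is finite one of these stopping times never fires, hence `X` converges there; where `∑ η` is
finite `P` converges too, and undoing the discount gives both conclusions.
-/

open MeasureTheory Filter Topology Finset

namespace MeasureTheory

variable {Ω : Type*} {m0 : MeasurableSpace Ω} {μ : Measure Ω} {ℱ : Filtration ℕ m0}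
  {f g : ℕ → Ω → ℝ}

theorem Supermartingale.exists_ae_tendsto_of_bddBelow [IsFiniteMeasure μ]
    (hf : Supermartingale f ℱ μ) {C : ℝ} (hC : ∀ t a, C ≤ f t a) :
    ∀ᵐ a ∂μ, ∃ l, Tendsto (fun t => f t a) atTop (𝓝 l) := by
  have hL1 (t : ℕ) : ∫ a, ‖f t a‖ ∂μ ≤ ∫ a, f 0 a ∂μ + 2 * |C| * μ.real Set.univ := by
    calc ∫ a, ‖f t a‖ ∂μ ≤ ∫ a, (f t a + 2 * |C|) ∂μ :=
          integral_mono (hf.integrable t).norm ((hf.integrable t).add (integrable_const _))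
            fun a => abs_le.2 ⟨by linarith [hC t a, neg_abs_le C], by linarith [abs_nonneg C]⟩
      _ = ∫ a, f t a ∂μ + 2 * |C| * μ.real Set.univ := by
          rw [integral_add (hf.integrable t) (integrable_const _), integral_const, smul_eq_mul,
            mul_comm]
      _ ≤ _ := by
          have := hf.setIntegral_le (Nat.zero_le t) MeasurableSet.univ
          simp only [Measure.restrict_univ] at this
          linarith
  have hconv := hf.neg.exists_ae_tendsto_of_bdd
      (R := (∫ a, f 0 a ∂μ + 2 * |C| * μ.real Set.univ).toNNReal) fun t => by
    rw [Pi.neg_apply, eLpNorm_neg, eLpNorm_one_eq_lintegral_enorm,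
      ← ofReal_integral_norm_eq_lintegral_enorm (hf.integrable t)]
    exact ENNReal.ofReal_le_ofReal (hL1 t)
  filter_upwards [hconv] with a ⟨l, hl⟩
  exact ⟨-l, by simpa using hl.neg⟩

/-- Stopping at the first `t` with `g (t + 1) > M`, rather than `g t > M`, keeps `g ≤ M` up to and
including the stopping time. -/
theorem neg_le_stoppedProcess_hittingAfter {M : ℝ} (hg0 : ∀ a, g 0 a ≤ M)
    (hfg : ∀ t a, -g t a ≤ f t a) (t : ℕ) (a : Ω) :
    -M ≤ stoppedProcess f (hittingAfter (fun t => g (t + 1)) (Set.Ioi M) 0) t a := by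
  set τ := hittingAfter (fun t => g (t + 1)) (Set.Ioi M) 0
  have hg_le (s : ℕ) (hs : (s : WithTop ℕ) ≤ τ a) : g s a ≤ M := by
    cases s with
    | zero => exact hg0 a
    | succ k =>
      exact not_lt.1 (notMem_of_lt_hittingAfter (u := fun t => g (t + 1))
        ((WithTop.coe_lt_coe.2 k.lt_succ_self).trans_le hs) (Nat.zero_le k))
  rcases le_total (t : WithTop ℕ) (τ a) with ht | ht
  · rw [stoppedProcess_eq_of_le (u := f) (i := t) ht]
    linarith [hfg t a, hg_le t ht]
  · rw [stoppedProcess_eq_of_ge (u := f) (i := t) ht]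
    lift τ a to ℕ using ne_top_of_le_ne_top WithTop.coe_ne_top ht with k hk
    simp only [WithTop.untopD_coe]
    linarith [hfg k a, hg_le k le_rfl]

theorem Supermartingale.ae_exists_tendsto_of_neg_predictable_le [IsFiniteMeasure μ]
    (hf : Supermartingale f ℱ μ) (hg : Adapted ℱ fun t => g (t + 1)) (hg0 : g 0 = 0)
    (hfg : ∀ t a, -g t a ≤ f t a) :
    ∀ᵐ a ∂μ, BddAbove (Set.range fun t => g t a) →
      ∃ l, Tendsto (fun t => f t a) atTop (𝓝 l) := by
  let τ (M : ℕ) := hittingAfter (fun t => g (t + 1)) (Set.Ioi (M : ℝ)) 0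
  have hstopped (M : ℕ) : Supermartingale (stoppedProcess f (τ M)) ℱ μ := by
    simpa using (hf.neg.stoppedProcess (hg.isStoppingTime_hittingAfter measurableSet_Ioi)).neg
  have hconv (M : ℕ) := (hstopped M).exists_ae_tendsto_of_bddBelow
    (neg_le_stoppedProcess_hittingAfter (fun a => by simp [hg0]) hfg)
  filter_upwards [ae_all_iff.2 hconv] with a ha ⟨B, hB⟩
  obtain ⟨M, hM⟩ := exists_nat_ge B
  have hτ : τ M a = ⊤ := hittingAfter_eq_top_iff.2 fun t _ =>
    not_lt.2 ((hB ⟨t + 1, rfl⟩).trans hM)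
  simpa [stoppedProcess_eq_of_le, hτ] using ha M

end MeasureTheory

namespace RobbinsSiegmund

variable {Ω : Type*}

noncomputable def compound (η : ℕ → Ω → ℝ) (t : ℕ) (a : Ω) : ℝ :=
  ∏ s ∈ range t, (1 + η s a)

noncomputable def discountedSum (η f : ℕ → Ω → ℝ) (t : ℕ) (a : Ω) : ℝ :=
  ∑ s ∈ range t, f s a / compound η (s + 1) a

noncomputable def discounted (η υ ψ ω : ℕ → Ω → ℝ) (t : ℕ) (a : Ω) : ℝ :=
  ω t a / compound η t a + discountedSum η ψ t a - discountedSum η υ t a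

variable {η : ℕ → Ω → ℝ}

theorem compound_succ (t : ℕ) (a : Ω) : compound η (t + 1) a = compound η t a * (1 + η t a) :=
  prod_range_succ _ _

theorem discountedSum_succ (f : ℕ → Ω → ℝ) (t : ℕ) (a : Ω) :
    discountedSum η f (t + 1) a = discountedSum η f t a + f t a / compound η (t + 1) a :=
  sum_range_succ _ _

section Nonneg

variable (hη : ∀ t a, 0 ≤ η t a)
include hη

theorem one_le_compound (t : ℕ) (a : Ω) : 1 ≤ compound η t a :=
  one_le_prod fun s _ => le_add_of_nonneg_right (hη s a)

theorem compound_pos (t : ℕ) (a : Ω) : 0 < compound η t a :=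
  one_pos.trans_le (one_le_compound hη t a)

theorem discountedSum_nonneg {f : ℕ → Ω → ℝ} (hf : ∀ t a, 0 ≤ f t a) (t : ℕ) (a : Ω) :
    0 ≤ discountedSum η f t a :=
  sum_nonneg fun s _ => div_nonneg (hf s a) (compound_pos hη _ a).le

theorem neg_discountedSum_le_discounted {υ ψ ω : ℕ → Ω → ℝ} (hψ : ∀ t a, 0 ≤ ψ t a)
    (hω : ∀ t a, 0 ≤ ω t a) (t : ℕ) (a : Ω) :
    -discountedSum η υ t a ≤ discounted η υ ψ ω t a := by
  have := div_nonneg (hω t a) (compound_pos hη t a).le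
  have := discountedSum_nonneg hη hψ t a
  rw [discounted]
  linarith

end Nonneg

section Measurability

variable {m0 : MeasurableSpace Ω} {ℱ : Filtration ℕ m0}

theorem measurable_compound (hηa : Adapted ℱ η) {t u : ℕ} (htu : t ≤ u + 1) :
    Measurable[ℱ u] (compound η t) :=
  Finset.measurable_prod _ fun s hs =>
    measurable_const.add ((hηa s).mono (ℱ.mono (by grind)) le_rfl)

theorem measurable_discountedSum (hηa : Adapted ℱ η) {f : ℕ → Ω → ℝ} (hfa : Adapted ℱ f)
    {t u : ℕ} (htu : t ≤ u + 1) : Measurable[ℱ u] (discountedSum η f t) :=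
  Finset.measurable_sum _ fun s hs =>
    ((hfa s).mono (ℱ.mono (by grind)) le_rfl).div
      (measurable_compound hηa (by grind))

theorem adapted_discounted {υ ψ ω : ℕ → Ω → ℝ} (hηa : Adapted ℱ η) (hυa : Adapted ℱ υ)
    (hψa : Adapted ℱ ψ) (hωa : Adapted ℱ ω) : Adapted ℱ (discounted η υ ψ ω) := fun t =>
  (((hωa t).div (measurable_compound hηa t.le_succ)).add
    (measurable_discountedSum hηa hψa t.le_succ)).sub (measurable_discountedSum hηa hυa t.le_succ)

end Measurability

section Integrability

variable {m0 : MeasurableSpace Ω} {ℱ : Filtration ℕ m0} {μ : Measure Ω}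
  (hη : ∀ t a, 0 ≤ η t a) (hηa : Adapted ℱ η)
include hη hηa

theorem integrable_div_compound {f : Ω → ℝ} (hf : Integrable f μ) (t : ℕ) :
    Integrable (fun a => f a / compound η t a) μ := by
  simp only [div_eq_mul_inv]
  refine hf.mul_bdd (c := 1) ?_ (ae_of_all _ fun a => ?_)
  · exact ((measurable_compound hηa t.le_succ).inv.mono (ℱ.le t) le_rfl).aestronglyMeasurable
  · rw [norm_inv, Real.norm_of_nonneg (compound_pos hη t a).le]
    exact inv_le_one_of_one_le₀ (one_le_compound hη t a)

theorem integrable_discountedSum {f : ℕ → Ω → ℝ} (hf : ∀ t, Integrable (f t) μ) (t : ℕ) :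
    Integrable (discountedSum η f t) μ :=
  integrable_finsetSum _ fun s _ => integrable_div_compound hη hηa (hf s) (s + 1)

theorem integrable_discounted {υ ψ ω : ℕ → Ω → ℝ} (hυi : ∀ t, Integrable (υ t) μ)
    (hψi : ∀ t, Integrable (ψ t) μ) (hωi : ∀ t, Integrable (ω t) μ) (t : ℕ) :
    Integrable (discounted η υ ψ ω t) μ :=
  ((integrable_div_compound hη hηa (hωi t) t).add (integrable_discountedSum hη hηa hψi t)).sub
    (integrable_discountedSum hη hηa hυi t)

end Integrability

section Supermartingale

variable {m0 : MeasurableSpace Ω} {ℱ : Filtration ℕ m0} {μ : Measure Ω} [IsFiniteMeasure μ]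
  {υ ψ ω : ℕ → Ω → ℝ} (hη : ∀ t a, 0 ≤ η t a)
  (hηa : Adapted ℱ η) (hυa : Adapted ℱ υ) (hψa : Adapted ℱ ψ)
  (hυi : ∀ t, Integrable (υ t) μ) (hψi : ∀ t, Integrable (ψ t) μ)
  (hωi : ∀ t, Integrable (ω t) μ)
  (hrec : ∀ t, μ[ω (t + 1) | ℱ t] ≤ᵐ[μ] fun a => (1 + η t a) * ω t a + υ t a - ψ t a)
include hη hηa hυa hψa hυi hψi hωi hrec

theorem condExp_discounted_succ_le (t : ℕ) :
    μ[discounted η υ ψ ω (t + 1) | ℱ t] ≤ᵐ[μ] discounted η υ ψ ω t := by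
  set Q : Ω → ℝ := fun a => (compound η (t + 1) a)⁻¹
  set D := discountedSum η ψ (t + 1) - discountedSum η υ (t + 1)
  have hsplit : discounted η υ ψ ω (t + 1) = ω (t + 1) * Q + D := by
    ext a; simp only [discounted, Q, D, Pi.add_apply, Pi.mul_apply, Pi.sub_apply]; ring
  have hωQi : Integrable (ω (t + 1) * Q) μ :=
    (integrable_div_compound hη hηa (hωi (t + 1)) (t + 1)).congr
      (ae_of_all _ fun a => div_eq_mul_inv _ _)
  have hDi : Integrable D μ :=
    (integrable_discountedSum hη hηa hψi _).sub (integrable_discountedSum hη hηa hυi _)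
  have hDm : StronglyMeasurable[ℱ t] D :=
    ((measurable_discountedSum hηa hψa le_rfl).sub
      (measurable_discountedSum hηa hυa le_rfl)).stronglyMeasurable
  have hpull : μ[ω (t + 1) * Q | ℱ t] =ᵐ[μ] μ[ω (t + 1) | ℱ t] * Q :=
    condExp_mul_of_stronglyMeasurable_right
      (measurable_compound hηa le_rfl).inv.stronglyMeasurable hωQi (hωi (t + 1))
  rw [hsplit]
  filter_upwards [condExp_add hωQi hDi (ℱ t), hpull, hrec t] with a hadd hmul hle
  rw [hadd, Pi.add_apply, hmul, condExp_of_stronglyMeasurable (ℱ.le t) hDm hDi]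
  calc μ[ω (t + 1) | ℱ t] a * Q a + D a
      ≤ ((1 + η t a) * ω t a + υ t a - ψ t a) * Q a + D a := by
        gcongr
        exact (inv_pos.2 (compound_pos hη _ a)).le
    _ = discounted η υ ψ ω t a := by
        have := (compound_pos hη t a).ne'
        have := (add_pos_of_pos_of_nonneg one_pos (hη t a)).ne'
        simp only [Q, D, discounted, Pi.sub_apply, discountedSum_succ, compound_succ]
        field_simp
        ring

theorem supermartingale_discounted (hωa : Adapted ℱ ω) :
    Supermartingale (discounted η υ ψ ω) ℱ μ :=
  supermartingale_nat (adapted_discounted hηa hυa hψa hωa).stronglyAdapted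
    (integrable_discounted hη hηa hυi hψi hωi)
    (condExp_discounted_succ_le hη hηa hυa hψa hυi hψi hωi hrec)

end Supermartingale

section Pointwise

variable {υ ψ ω : ℕ → Ω → ℝ} {a : Ω} (hη : ∀ t a, 0 ≤ η t a)

theorem exists_tendsto_compound (hηs : Summable fun t => η t a) :
    ∃ L, Tendsto (fun t => compound η t a) atTop (𝓝 L) :=
  ⟨_, (Real.multipliable_one_add_of_summable hηs).hasProd.tendsto_prod_nat⟩

theorem tendsto_discountedSum {f : ℕ → Ω → ℝ}
    (hfs : Summable fun t => f t a / compound η (t + 1) a) :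
    Tendsto (fun t => discountedSum η f t a) atTop (𝓝 (∑' t, f t a / compound η (t + 1) a)) :=
  hfs.hasSum.tendsto_sum_nat

include hη

theorem summable_div_compound {f : ℕ → Ω → ℝ} (hf : ∀ t a, 0 ≤ f t a)
    (hfs : Summable fun t => f t a) : Summable fun t => f t a / compound η (t + 1) a :=
  hfs.of_nonneg_of_le (fun t => div_nonneg (hf t a) (compound_pos hη _ a).le)
    fun t => div_le_self (hf t a) (one_le_compound hη _ a)

theorem tendsto_and_summable_of_tendsto_discounted (hυ : ∀ t a, 0 ≤ υ t a)
    (hψ : ∀ t a, 0 ≤ ψ t a) (hω : ∀ t a, 0 ≤ ω t a) (hηs : Summable fun t => η t a)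
    (hυs : Summable fun t => υ t a) {l : ℝ}
    (hX : Tendsto (fun t => discounted η υ ψ ω t a) atTop (𝓝 l)) :
    (∃ l, Tendsto (fun t => ω t a) atTop (𝓝 l)) ∧ Summable fun t => ψ t a := by
  obtain ⟨L, hP⟩ := exists_tendsto_compound hηs
  have hυ' := tendsto_discountedSum (summable_div_compound hη hυ hυs)
  obtain ⟨B, hB⟩ := (hX.add hυ').bddAbove_range
  have hψs : Summable fun t => ψ t a / compound η (t + 1) a :=
    summable_of_sum_range_le (fun t => div_nonneg (hψ t a) (compound_pos hη _ a).le) fun t => by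
      have := div_nonneg (hω t a) (compound_pos hη t a).le
      have := hB ⟨t, rfl⟩
      simp only [discounted] at this
      change discountedSum η ψ t a ≤ B
      linarith
  have hψ' := tendsto_discountedSum hψs
  constructor
  · refine ⟨_, (hP.mul ((hX.sub hψ').add hυ')).congr fun t => ?_⟩
    have := (compound_pos hη t a).ne'
    simp only [discounted]
    field_simp
    ring
  · obtain ⟨C, hC⟩ := hP.bddAbove_range
    refine (hψs.mul_left C).of_nonneg_of_le (hψ · a) fun t => ?_
    calc ψ t a = compound η (t + 1) a * (ψ t a / compound η (t + 1) a) := by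
          field_simp [(compound_pos hη (t + 1) a).ne']
      _ ≤ C * (ψ t a / compound η (t + 1) a) := by
          gcongr
          · exact div_nonneg (hψ t a) (compound_pos hη _ a).le
          · exact hC ⟨t + 1, rfl⟩

end Pointwise

end RobbinsSiegmund

open RobbinsSiegmund

theorem stmt_11_general {Ω : Type*} {mΩ : MeasurableSpace Ω} {μ : Measure Ω}
    [IsProbabilityMeasure μ] (ℱ : Filtration ℕ mΩ)
    (ω η υ ψ : ℕ → Ω → ℝ)
    (hω_adapted : Adapted ℱ ω) (hη_adapted : Adapted ℱ η)
    (hυ_adapted : Adapted ℱ υ) (hψ_adapted : Adapted ℱ ψ)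
    (hω_int : ∀ t, Integrable (ω t) μ)
    (hυ_int : ∀ t, Integrable (υ t) μ) (hψ_int : ∀ t, Integrable (ψ t) μ)
    (hω_nonneg : ∀ t, 0 ≤ ω t) (hη_nonneg : ∀ t, 0 ≤ η t)
    (hυ_nonneg : ∀ t, 0 ≤ υ t) (hψ_nonneg : ∀ t, 0 ≤ ψ t)
    (hrec : ∀ t, μ[ω (t + 1) | ℱ t] ≤ᵐ[μ]
      fun a => (1 + η t a) * ω t a + υ t a - ψ t a)
    (hη_sum : ∀ᵐ a ∂μ, Summable (fun t => η t a))
    (hυ_sum : ∀ᵐ a ∂μ, Summable (fun t => υ t a)) :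
    ∀ᵐ a ∂μ,
      (∃ l : ℝ, Tendsto (fun t => ω t a) atTop (nhds l)) ∧
      Summable (fun t => ψ t a) := by
  have hX := supermartingale_discounted hη_nonneg hη_adapted hυ_adapted hψ_adapted hυ_int hψ_int
    hω_int hrec hω_adapted
  have hconv := hX.ae_exists_tendsto_of_neg_predictable_le
    (fun t => measurable_discountedSum hη_adapted hυ_adapted le_rfl) rfl
    (neg_discountedSum_le_discounted hη_nonneg hψ_nonneg hω_nonneg)
  filter_upwards [hη_sum, hυ_sum, hconv] with a hηs hυs hXa
  obtain ⟨l, hl⟩ :=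
    hXa (tendsto_discountedSum (summable_div_compound hη_nonneg hυ_nonneg hυs)).bddAbove_range
  exact tendsto_and_summable_of_tendsto_discounted hη_nonneg hυ_nonneg hψ_nonneg hω_nonneg hηs hυs
    hl

theorem stmt_11 {Ω : Type*} {mΩ : MeasurableSpace Ω} {μ : Measure Ω}
    [IsProbabilityMeasure μ] (ℱ : Filtration ℕ mΩ)
    (ω η υ ψ : ℕ → Ω → ℝ)
    (hω_adapted : Adapted ℱ ω) (hη_adapted : Adapted ℱ η)
    (hυ_adapted : Adapted ℱ υ) (hψ_adapted : Adapted ℱ ψ)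
    (hω_int : ∀ t, Integrable (ω t) μ) (hη_int : ∀ t, Integrable (η t) μ)
    (hυ_int : ∀ t, Integrable (υ t) μ) (hψ_int : ∀ t, Integrable (ψ t) μ)
    (hω_nonneg : ∀ t, 0 ≤ ω t) (hη_nonneg : ∀ t, 0 ≤ η t)
    (hυ_nonneg : ∀ t, 0 ≤ υ t) (hψ_nonneg : ∀ t, 0 ≤ ψ t)
    (hrec : ∀ t, μ[ω (t + 1) | ℱ t] ≤ᵐ[μ]
      fun a => (1 + η t a) * ω t a + υ t a - ψ t a)
    (hη_sum : ∀ᵐ a ∂μ, Summable (fun t => η t a))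
    (hυ_sum : ∀ᵐ a ∂μ, Summable (fun t => υ t a)) :
    ∀ᵐ a ∂μ,
      (∃ l : ℝ, Tendsto (fun t => ω t a) atTop (nhds l)) ∧
      Summable (fun t => ψ t a) :=
  stmt_11_general ℱ ω η υ ψ hω_adapted hη_adapted hυ_adapted hψ_adapted hω_int hυ_int hψ_int
    hω_nonneg hη_nonneg hυ_nonneg hψ_nonneg hrec hη_sum hυ_sum
end

section
/- Deterministic version of Robbins–Siegmund: let $\omega_t, \eta_t, \upsilon_t, \psi_t \ge 0$ be real sequences with $\omega_{t+1} \le (1+\eta_t)\omega_t + \upsilon_t - \psi_t$ for all $t \ge 0$, $\sum_t \eta_t < \infty$, and $\sum_t \upsilon_t < \infty$. Then $\lim_{t\to\infty}\omega_t$ exists and is finite, and $\sum_{t=0}^\infty \psi_t < \infty$. -/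
/-!
Dividing by the partial products `P t = ∏ s < t, (1 + η s)` removes the factor `1 + η t`:
`V t = ω t / P t` satisfies `V (t + 1) + ψ t / C ≤ V t + υ t`, where `C = ∏' t, (1 + η t)` bounds
every `P t`. For such a quasi-decreasing nonnegative sequence, `V t - ∑ s < t, υ s` is antitone and
bounded below, so `V` converges, and telescoping bounds the partial sums of `ψ / C`. Since `P`
converges to `C`, so does `ω = V * P`.
-/

open Filter Topology Finset

section QuasiFejer

variable {u g υ : ℕ → ℝ}

theorem exists_tendsto_of_le_add_of_summable (hu : BddBelow (Set.range u)) (hυ : Summable υ)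
    (h : ∀ t, u (t + 1) ≤ u t + υ t) : ∃ l, Tendsto u atTop (𝓝 l) := by
  set U : ℕ → ℝ := fun t => ∑ s ∈ range t, υ s
  have hU : Tendsto U atTop (𝓝 (∑' s, υ s)) := hυ.hasSum.tendsto_sum_nat
  have h_anti : Antitone (u - U) := antitone_nat_of_succ_le fun t => by
    simp only [Pi.sub_apply, U, sum_range_succ]
    linarith [h t]
  have h_bdd : BddBelow (Set.range (u - U)) := by
    obtain ⟨a, ha⟩ := hu
    obtain ⟨b, hb⟩ := hU.bddAbove_range
    refine ⟨a - b, ?_⟩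
    rintro _ ⟨t, rfl⟩
    exact sub_le_sub (ha ⟨t, rfl⟩) (hb ⟨t, rfl⟩)
  exact ⟨_, by simpa using (tendsto_atTop_ciInf h_anti h_bdd).add hU⟩

theorem summable_of_add_le_add (hu : ∀ t, 0 ≤ u t) (hg : ∀ t, 0 ≤ g t) (hυ : Summable υ)
    (h : ∀ t, u (t + 1) + g t ≤ u t + υ t) : Summable g := by
  have telescope : ∀ t, u t + ∑ s ∈ range t, g s ≤ u 0 + ∑ s ∈ range t, υ s := by
    intro t
    induction t with
    | zero => simp
    | succ t ih => simp only [sum_range_succ]; linarith [h t]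
  obtain ⟨b, hb⟩ := hυ.hasSum.tendsto_sum_nat.bddAbove_range
  refine summable_of_sum_range_le hg (c := u 0 + b) fun t => ?_
  linarith [telescope t, hu t, hb ⟨t, rfl⟩]

end QuasiFejer

section PartialProducts

variable {η : ℕ → ℝ}

theorem one_le_prod_range_one_add (hη : ∀ t, 0 ≤ η t) (t : ℕ) :
    1 ≤ ∏ s ∈ range t, (1 + η s) :=
  one_le_prod fun s _ => le_add_of_nonneg_right (hη s)

theorem monotone_prod_range_one_add (hη : ∀ t, 0 ≤ η t) :
    Monotone fun t => ∏ s ∈ range t, (1 + η s) :=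
  monotone_nat_of_le_succ fun t => by
    rw [prod_range_succ]
    exact le_mul_of_one_le_right (zero_le_one.trans (one_le_prod_range_one_add hη t))
      (le_add_of_nonneg_right (hη t))

theorem tendsto_prod_range_one_add (hη : Summable η) :
    Tendsto (fun t => ∏ s ∈ range t, (1 + η s)) atTop (𝓝 (∏' s, (1 + η s))) :=
  (Real.multipliable_one_add_of_summable hη).tendsto_prod_tprod_nat

theorem prod_range_one_add_le_tprod (hη : ∀ t, 0 ≤ η t) (hs : Summable η) (t : ℕ) :
    ∏ s ∈ range t, (1 + η s) ≤ ∏' s, (1 + η s) :=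
  (monotone_prod_range_one_add hη).ge_of_tendsto (tendsto_prod_range_one_add hs) t

theorem div_prod_range_add_div_tprod_le {ω υ ψ : ℕ → ℝ} (hη : ∀ t, 0 ≤ η t) (hs : Summable η)
    (hυ : ∀ t, 0 ≤ υ t) (hψ : ∀ t, 0 ≤ ψ t) {t : ℕ}
    (hrec : ω (t + 1) ≤ (1 + η t) * ω t + υ t - ψ t) :
    ω (t + 1) / ∏ s ∈ range (t + 1), (1 + η s) + ψ t / ∏' s, (1 + η s) ≤
      ω t / ∏ s ∈ range t, (1 + η s) + υ t := by
  have hP' := one_le_prod_range_one_add hη (t + 1)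
  calc ω (t + 1) / ∏ s ∈ range (t + 1), (1 + η s) + ψ t / ∏' s, (1 + η s)
      ≤ (ω (t + 1) + ψ t) / ∏ s ∈ range (t + 1), (1 + η s) := by
        rw [add_div]
        have := hψ t
        gcongr
        exact prod_range_one_add_le_tprod hη hs (t + 1)
    _ ≤ ((1 + η t) * ω t + υ t) / ∏ s ∈ range (t + 1), (1 + η s) :=
        div_le_div_of_nonneg_right (by linarith) (by positivity)
    _ = ω t / ∏ s ∈ range t, (1 + η s) + υ t / ∏ s ∈ range (t + 1), (1 + η s) := by
        rw [prod_range_succ, add_div, mul_comm, mul_div_mul_right _ _ (by linarith [hη t])]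
    _ ≤ ω t / ∏ s ∈ range t, (1 + η s) + υ t := by gcongr; exact div_le_self (hυ t) hP'

end PartialProducts

theorem stmt_12 (ω η υ ψ : ℕ → ℝ)
    (hω : ∀ t, 0 ≤ ω t) (hη : ∀ t, 0 ≤ η t) (hυ : ∀ t, 0 ≤ υ t)
    (hψ : ∀ t, 0 ≤ ψ t)
    (hrec : ∀ t, ω (t + 1) ≤ (1 + η t) * ω t + υ t - ψ t)
    (hη_sum : Summable η) (hυ_sum : Summable υ) :
    (∃ l : ℝ, Tendsto ω atTop (nhds l)) ∧ Summable ψ := by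
  set P : ℕ → ℝ := fun t => ∏ s ∈ range t, (1 + η s)
  set C : ℝ := ∏' s, (1 + η s)
  have hP_pos : ∀ t, 0 < P t := fun t => one_pos.trans_le (one_le_prod_range_one_add hη t)
  have hC_pos : 0 < C := (hP_pos 0).trans_le (prod_range_one_add_le_tprod hη hη_sum 0)
  have hV : ∀ t, 0 ≤ ω t / P t := fun t => div_nonneg (hω t) (hP_pos t).le
  have hg : ∀ t, 0 ≤ ψ t / C := fun t => div_nonneg (hψ t) hC_pos.le
  have key : ∀ t, ω (t + 1) / P (t + 1) + ψ t / C ≤ ω t / P t + υ t := fun t =>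
    div_prod_range_add_div_tprod_le hη hη_sum hυ hψ (hrec t)
  obtain ⟨l, hl⟩ := exists_tendsto_of_le_add_of_summable ⟨0, by rintro _ ⟨t, rfl⟩; exact hV t⟩
    hυ_sum fun t => by linarith [key t, hg t]
  refine ⟨⟨l * C, ?_⟩, (summable_div_const_iff hC_pos.ne').mp
    (summable_of_add_le_add hV hg hυ_sum key)⟩
  refine (hl.mul (tendsto_prod_range_one_add hη_sum)).congr fun t => ?_
  exact div_mul_cancel₀ _ (hP_pos t).ne'
end
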